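/- Let ℓ ≥ 3 be an integer and S a (2^ℓ − 1)-periodic binary sequence whose linear complexity is at most 2ℓ (as is the case for Gold codes). Then there exists an integer k with 1 < k ≤ 7 such that S has a full peak in the periodic correlation measure of order k, i.e. θ_k(S) = 2^ℓ − 1. -/

import Mathlib

/-!
A linear recurrence of order `L ≤ 2ℓ` satisfied by the first `2T` terms of a `T`-periodic
sequence `s` (`T = 2^ℓ - 1`) holds for all indices, and then so it does for every shift-sum
`n ↦ ∑_{d ∈ A} s (n + d)`. The initial `L` values of these shift-sums range over `F₂^L`, which has
`2^L ≤ (T + 1)^2 ≤ ∑_{i ≤ 3} (T choose i)` elements; adding `{0, 1, 2, 3}` to the subsets of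
`{0, …, T - 1}` of size at most `3` gives more sets than that. Two of them, `B ≠ C`, share their
initial values, so the shift-sum over `D = B ∆ C` (in characteristic two) has zero initial values
and hence vanishes. Every term of the order-`|D|` correlation sum with shifts `D` is then `1`, a
full peak with `|D| ≤ 7`; if `|D| = 1` the sequence is zero and peaks at order `2`.
-/

open Finset

/-- The first `N` terms of the binary sequence `s` satisfy a linear recurrence of order `L`
over `F₂`: `s (i+L) = c_{L-1} s (i+L-1) + … + c_0 s i` for `0 ≤ i < N - L`. -/
def IsLinRecOn (s : ℕ → ZMod 2) (N L : ℕ) : Prop :=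
  ∃ c : Fin L → ZMod 2, ∀ i, i + L < N → s (i + L) = ∑ j : Fin L, c j * s (i + j)

/-- The `N`th linear complexity of a binary sequence `s`: the smallest positive `L` such that
the first `N` terms satisfy a linear recurrence of order `L`, with the convention that it is `0`
when the first `N` terms all vanish. -/
noncomputable def linComplexity (s : ℕ → ZMod 2) (N : ℕ) : ℕ :=
  if ∀ i < N, s i = 0 then 0 else sInf {L | 0 < L ∧ IsLinRecOn s N L}

/-- The `N`th (aperiodic) correlation measure of order `k` of a binary sequence `s`:
`max_{U,D} |∑_{n=0}^{U-1} (-1)^{s_{n+d₁}+…+s_{n+d_k}}|` over `U ≤ N - k + 1` and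
`0 ≤ d₁ < … < d_k ≤ N - U`. -/
noncomputable def corr (s : ℕ → ZMod 2) (N k : ℕ) : ℕ :=
  sSup {m : ℕ | ∃ (U : ℕ) (d : Fin k → ℕ), U + k ≤ N + 1 ∧ StrictMono d ∧
    (∀ j, d j + U ≤ N) ∧
    m = (∑ n ∈ range U, (-1 : ℤ) ^ (∑ j : Fin k, (s (n + d j)).val)).natAbs}

/-- The periodic correlation measure of order `k` of a `T`-periodic binary sequence `s`:
`max_D |∑_{n=0}^{T-1} (-1)^{s_{n+d₁}+…+s_{n+d_k}}|` over `0 ≤ d₁ < … < d_k < T`. -/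
noncomputable def pcorr (s : ℕ → ZMod 2) (T k : ℕ) : ℕ :=
  sSup {m : ℕ | ∃ d : Fin k → ℕ, StrictMono d ∧ (∀ j, d j < T) ∧
    m = (∑ n ∈ range T, (-1 : ℤ) ^ (∑ j : Fin k, (s (n + d j)).val)).natAbs}

/-- The first `N` terms of `s` are generated by a (not necessarily linear) recurrence of
order `M`. -/
def IsMaxRecOn (s : ℕ → ZMod 2) (N M : ℕ) : Prop :=
  ∃ f : (Fin M → ZMod 2) → ZMod 2, ∀ i, i + M < N → s (i + M) = f (fun j => s (i + j))

/-- The `N`th maximum-order complexity of a binary sequence `s`. -/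
noncomputable def maxOrderComplexity (s : ℕ → ZMod 2) (N : ℕ) : ℕ :=
  sInf {M | 0 < M ∧ IsMaxRecOn s N M}

open scoped symmDiff

lemma Finset.sum_symmDiff_of_charTwo {α R : Type*} [DecidableEq α] [Ring R] [CharP R 2]
    (B C : Finset α) (f : α → R) :
    ∑ a ∈ B ∆ C, f a = ∑ a ∈ B, f a + ∑ a ∈ C, f a := by
  rw [Finset.symmDiff_def, sum_union disjoint_sdiff_sdiff, ← sum_inter_add_sum_sdiff B C,
    ← sum_inter_add_sum_sdiff C B, inter_comm C B]
  have : ∑ a ∈ B ∩ C, f a + ∑ a ∈ B ∩ C, f a = 0 := CharTwo.add_self_eq_zero _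
  rw [add_add_add_comm, this, zero_add]

namespace LinearRecurrence

variable {R : Type*} [CommSemiring R] {E : LinearRecurrence R} {u : ℕ → R}

lemma IsSolution.shift (hu : E.IsSolution u) (d : ℕ) :
    E.IsSolution fun n => u (n + d) := by
  intro n
  simpa only [add_right_comm] using hu (n + d)

lemma IsSolution.sum_shift (hu : E.IsSolution u) (D : Finset ℕ) :
    E.IsSolution fun n => ∑ d ∈ D, u (n + d) := by
  have := E.solSpace.sum_mem fun d (_ : d ∈ D) =>
    (E.is_sol_iff_mem_solSpace _).mp (hu.shift d)
  rwa [Finset.sum_fn] at this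

lemma IsSolution.eq_zero_of_forall_lt_order (hu : E.IsSolution u)
    (h : ∀ n < E.order, u n = 0) : u = 0 :=
  (E.eq_iff_eqOn_range_order u 0 hu (E.solSpace.zero_mem)).mpr fun n hn =>
    h n (mem_range.mp hn)

lemma isSolution_of_periodic {T : ℕ} (hT : 0 < T)
    (hper : ∀ i, u (i + T) = u i)
    (h : ∀ i < T, u (i + E.order) = ∑ j, E.coeffs j * u (i + j)) : E.IsSolution u := by
  intro i
  induction i using Nat.strong_induction_on with
  | _ i ih =>
    by_cases hi : i < T
    · exact h i hi
    obtain ⟨i, rfl⟩ : ∃ i', i = i' + T := ⟨i - T, by omega⟩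
    simp only [add_right_comm i T, hper]
    exact ih i (by omega)

end LinearRecurrence

lemma LinearRecurrence.IsSolution.exists_ne_sum_symmDiff_eq_zero
    {E : LinearRecurrence (ZMod 2)} {s : ℕ → ZMod 2} (hs : E.IsSolution s)
    (𝒜 : Finset (Finset ℕ)) (h𝒜 : 2 ^ E.order < #𝒜) :
    ∃ B ∈ 𝒜, ∃ C ∈ 𝒜, B ≠ C ∧ ∀ n, ∑ d ∈ B ∆ C, s (n + d) = 0 := by
  have hcard : #(univ : Finset (Fin E.order → ZMod 2)) < #𝒜 := by simpa using h𝒜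
  obtain ⟨B, hB, C, hC, hBC, hinit⟩ := exists_ne_map_eq_of_card_lt_of_maps_to hcard
    (f := fun A (j : Fin E.order) => ∑ d ∈ A, s (j + d)) fun A _ => mem_univ _
  refine ⟨B, hB, C, hC, hBC, congrFun ((hs.sum_shift _).eq_zero_of_forall_lt_order ?_)⟩
  intro j hj
  rw [sum_symmDiff_of_charTwo, congrFun hinit ⟨j, hj⟩]
  exact CharTwo.add_self_eq_zero _

lemma sq_succ_le_sum_range_four_choose {n : ℕ} (hn : 7 ≤ n) :
    (n + 1) ^ 2 ≤ ∑ i ∈ range 4, n.choose i := by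
  induction n, hn using Nat.le_induction with
  | base => decide
  | succ n hn ih =>
    simp only [sum_range_succ, sum_range_zero, Nat.choose_succ_succ', Nat.choose_zero_right,
      Nat.choose_one_right, zero_add, Nat.reduceAdd] at ih ⊢
    have h2 : n + 2 ≤ n.choose 2 := by
      rw [Nat.choose_two_right, Nat.le_div_iff_mul_le two_pos]
      obtain ⟨m, rfl⟩ : ∃ m, n = m + 7 := ⟨n - 7, by omega⟩
      rw [Nat.add_sub_assoc (by norm_num)]
      nlinarith
    nlinarith

lemma exists_sum_shift_eq_zero_of_two_pow_le {E : LinearRecurrence (ZMod 2)} {s : ℕ → ZMod 2}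
    (hs : E.IsSolution s) {T : ℕ} (hT : 4 ≤ T)
    (hE : 2 ^ E.order ≤ ∑ i ∈ range 4, T.choose i) :
    ∃ D : Finset ℕ, D.Nonempty ∧ (∀ d ∈ D, d < T) ∧ #D ≤ 7 ∧ ∀ n, ∑ d ∈ D, s (n + d) = 0 := by
  set 𝒜₃ := (range 4).disjiUnion (fun i => powersetCard i (range T))
    ((range T).pairwise_disjoint_powersetCard.set_pairwise _)
  have h𝒜₃ : ∀ A ∈ 𝒜₃, A ⊆ range T ∧ #A ≤ 3 := by
    intro A hA
    obtain ⟨i, hi, hA⟩ := mem_disjiUnion.mp hA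
    rw [mem_powersetCard] at hA
    rw [mem_range] at hi
    exact ⟨hA.1, by omega⟩
  -- one set more than the count makes the pigeonhole strict (for `T = 7` it is exactly `2^6`)
  have hnotMem : range 4 ∉ 𝒜₃ := fun h => by simpa using (h𝒜₃ _ h).2
  have hcard : 2 ^ E.order < #(insert (range 4) 𝒜₃) := by
    have h𝒜₃card : #𝒜₃ = ∑ i ∈ range 4, T.choose i := by
      refine (card_disjiUnion _ _ _).trans ?_
      simp only [card_powersetCard, card_range]
    rw [card_insert_of_notMem hnotMem]
    omega
  obtain ⟨B, hB, C, hC, hBC, hzero⟩ := hs.exists_ne_sum_symmDiff_eq_zero _ hcard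
  have hsub : ∀ A ∈ insert (range 4) 𝒜₃, A ⊆ range T := by
    rintro A hA
    rcases mem_insert.mp hA with rfl | hA
    · exact range_subset_range.mpr hT
    · exact (h𝒜₃ A hA).1
  refine ⟨B ∆ C, symmDiff_nonempty.mpr hBC, fun d hd => ?_, ?_, hzero⟩
  · rcases mem_union.mp (symmDiff_subset_union hd) with h | h
    · exact mem_range.mp (hsub B hB h)
    · exact mem_range.mp (hsub C hC h)
  calc #(B ∆ C) ≤ #(B ∪ C) := card_le_card symmDiff_subset_union
    _ ≤ #B + #C := card_union_le _ _
    _ ≤ 7 := by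
      rcases mem_insert.mp hB with rfl | hB <;> rcases mem_insert.mp hC with rfl | hC
      · exact absurd rfl hBC
      all_goals grind

lemma neg_one_pow_sum_val_eq_one {ι : Type*} (t : Finset ι) {x : ι → ZMod 2}
    (h : ∑ i ∈ t, x i = 0) : (-1 : ℤ) ^ (∑ i ∈ t, (x i).val) = 1 := by
  refine Even.neg_one_pow (ZMod.natCast_eq_zero_iff_even.mp ?_)
  push_cast [ZMod.natCast_val, ZMod.cast_id', id]
  exact h

lemma pcorr_eq_self_of_sum_eq_zero {s : ℕ → ZMod 2} {T : ℕ} {D : Finset ℕ}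
    (hD : ∀ d ∈ D, d < T) (h : ∀ n, ∑ d ∈ D, s (n + d) = 0) : pcorr s T #D = T := by
  set e := D.orderEmbOfFin rfl
  have hsum : ∀ n, ∑ j : Fin #D, (s (n + e j)).val = ∑ d ∈ D, (s (n + d)).val := fun n => by
    conv_rhs => rw [← D.map_orderEmbOfFin_univ rfl, sum_map]
    rfl
  refine IsGreatest.csSup_eq ⟨⟨e, e.strictMono, fun j => hD _ (D.orderEmbOfFin_mem rfl j), ?_⟩, ?_⟩
  · simp only [hsum, neg_one_pow_sum_val_eq_one _ (h _), sum_const, card_range, nsmul_eq_mul,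
      mul_one, Int.natAbs_natCast]
  · rintro m ⟨d, -, -, rfl⟩
    calc _ ≤ ∑ n ∈ range T, ((-1 : ℤ) ^ (∑ j : Fin #D, (s (n + d j)).val)).natAbs :=
          Int.natAbs_sum_le _ _
      _ = T := by simp

lemma exists_pcorr_eq_self_of_sum_shift_eq_zero {s : ℕ → ZMod 2} {T : ℕ} (hT : 2 ≤ T)
    (hper : ∀ i, s (i + T) = s i) {D : Finset ℕ} (hDne : D.Nonempty) (hD : ∀ d ∈ D, d < T)
    (h : ∀ n, ∑ d ∈ D, s (n + d) = 0) : ∃ k, 1 < k ∧ k ≤ max 2 #D ∧ pcorr s T k = T := by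
  obtain h2 | ⟨d, rfl⟩ : 2 ≤ #D ∨ ∃ d, D = {d} := by
    rcases Nat.lt_or_ge #D 2 with h1 | h2
    · exact .inr (card_eq_one.mp (by have := hDne.card_pos; omega))
    · exact .inl h2
  · exact ⟨#D, h2, le_max_right _ _, pcorr_eq_self_of_sum_eq_zero hD h⟩
  have hzero : ∀ m, s m = 0 := fun m => by
    have hd := hD d (mem_singleton_self d)
    rw [← hper m, show m + T = m + T - d + d by omega]
    simpa using h (m + T - d)
  refine ⟨2, one_lt_two, le_max_left _ _, ?_⟩
  simpa using pcorr_eq_self_of_sum_eq_zero (D := {0, 1}) (s := s) (T := T)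
    (by simp; omega) (by simp [hzero])

lemma exists_isLinRecOn_of_linComplexity_le {s : ℕ → ZMod 2} {N m : ℕ}
    (h : linComplexity s N ≤ m) : ∃ L ≤ m, IsLinRecOn s N L := by
  unfold linComplexity at h
  split_ifs at h with hzero
  · exact ⟨m, le_rfl, fun _ => 0, fun i hi => by simpa using hzero _ hi⟩
  · have hne : {L | 0 < L ∧ IsLinRecOn s N L}.Nonempty := by
      have hN : 0 < N := Nat.pos_of_ne_zero fun hN => hzero fun i hi => by omega
      exact ⟨N, hN, fun _ => 0, fun i hi => by omega⟩
    exact ⟨_, h, (Nat.sInf_mem hne).2⟩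

/-- **Gold codes.** A `(2^ℓ - 1)`-periodic binary sequence with linear complexity at most `2ℓ`
has a full peak in the periodic correlation measure of some order `k` with `1 < k ≤ 7`. -/
theorem gold_code_peak (ℓ : ℕ) (hℓ : 3 ≤ ℓ) (s : ℕ → ZMod 2)
    (hper : ∀ i, s (i + (2 ^ ℓ - 1)) = s i)
    (hL : linComplexity s (2 * (2 ^ ℓ - 1)) ≤ 2 * ℓ) :
    ∃ k, 1 < k ∧ k ≤ 7 ∧ pcorr s (2 ^ ℓ - 1) k = 2 ^ ℓ - 1 := by
  set T := 2 ^ ℓ - 1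
  have hT : T + 1 = 2 ^ ℓ := Nat.sub_add_cancel Nat.one_le_two_pow
  have hT7 : 7 ≤ T := by have := Nat.pow_le_pow_right two_pos hℓ; omega
  have hℓT : 2 * ℓ ≤ T := by
    obtain ⟨m, rfl⟩ : ∃ m, ℓ = m + 3 := ⟨ℓ - 3, by omega⟩
    have := Nat.lt_two_pow_self (n := m)
    rw [pow_add] at hT
    omega
  obtain ⟨L, hLℓ, c, hc⟩ := exists_isLinRecOn_of_linComplexity_le hL
  have hsol : (⟨L, c⟩ : LinearRecurrence (ZMod 2)).IsSolution s :=
    LinearRecurrence.isSolution_of_periodic (by omega) hper fun i hi => hc i (by omega)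
  have hcount : 2 ^ L ≤ ∑ i ∈ range 4, T.choose i := calc
    2 ^ L ≤ 2 ^ (2 * ℓ) := Nat.pow_le_pow_right two_pos hLℓ
    _ = (T + 1) ^ 2 := by rw [hT, ← pow_mul, mul_comm]
    _ ≤ _ := sq_succ_le_sum_range_four_choose hT7
  obtain ⟨D, hDne, hDT, hD7, hDzero⟩ :=
    exists_sum_shift_eq_zero_of_two_pow_le hsol (by omega) hcount
  obtain ⟨k, hk, hkD, hpeak⟩ :=
    exists_pcorr_eq_self_of_sum_shift_eq_zero (by omega) hper hDne hDT hDzero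
  exact ⟨k, hk, hkD.trans (max_le (by norm_num) hD7), hpeak⟩
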